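/- arXiv:1410.4624 — 3 statements merged into one kernel-verified Lean document; each statement's English description precedes it below -/
import Mathlib

section
/- Let K, L ≥ 1 and let M_α, M_β, d_{αk}, d_{βl} be positive integers. Suppose there are matrices H_{αk} ∈ ℂ^{N_{αk}×M_α}, U_{αk} ∈ ℂ^{N_{αk}×d_{αk}}, V_{αk} ∈ ℂ^{M_α×d_{αk}}, H_{βl} ∈ ℂ^{M_β×N_{βl}}, V_{βl} ∈ ℂ^{N_{βl}×d_{βl}}, U_{βl} ∈ ℂ^{M_β×d_{βl}}, and G_β ∈ ℂ^{M_β×M_α} such that: U_{αk}† H_{αk} V_{αi} = 0 for all i ≠ k; rank(U_{αk}† H_{αk} V_{αk}) = d_{αk} for all k; U_{βl}† H_{βj} V_{βj} = 0 for all j ≠ l; rank(U_{βl}† H_{βl} V_{βl}) = d_{βl} for all l; U_{βl}† G_β V_{αk} = 0 for all k, l; and rank(G_β) = min(M_α, M_β). Then ∑_{k=1}^K d_{αk} + ∑_{l=1}^L d_{βl} ≤ max(M_α, M_β). (Condition (8c) of Theorem 1, deterministic form under a full-rank BS-to-BS channel.) -/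
/-!
Stack the downlink precoders `Vα k` side by side into `V` and the uplink postcoders `(Uβ l)ᴴ` on
top of each other into `B`. The zero-forcing and rank conditions make `A * V` and `B * C`
invertible block-diagonal matrices for suitable stackings `A`, `C`, so `rank V ≥ ∑ dα` and
`rank B ≥ ∑ dβ`, while the cross-cell condition says `B * Gβ * V = 0`. Sylvester's rank
inequality for `B * Gβ`, together with `(B * Gβ) * V = 0`, gives
`rank B + rank Gβ + rank V ≤ Mα + Mβ`, and `Mα + Mβ - min Mα Mβ = max Mα Mβ`.
-/

open Matrix Module

/-- Sylvester's rank inequality. -/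
theorem LinearMap.finrank_range_add_finrank_range_le {K V V' V'' : Type*} [Field K]
    [AddCommGroup V] [Module K V] [AddCommGroup V'] [Module K V'] [FiniteDimensional K V']
    [AddCommGroup V''] [Module K V''] (f : V →ₗ[K] V') (g : V' →ₗ[K] V'') :
    finrank K (range f) + finrank K (range g) ≤
      finrank K V' + finrank K (range (g ∘ₗ f)) := by
  set h := g.domRestrict (range f)
  have hrange : range h = range (g ∘ₗ f) := by
    rw [LinearMap.range_domRestrict, LinearMap.range_comp]
  have hker : finrank K (ker h) ≤ finrank K (ker g) := by
    rw [← Submodule.finrank_map_subtype_eq]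
    refine Submodule.finrank_mono ?_
    rintro _ ⟨x, hx, rfl⟩
    exact hx
  have := h.finrank_range_add_finrank_ker
  rw [hrange] at this
  have := g.finrank_range_add_finrank_ker
  omega

namespace Matrix

variable {K : Type*} [Field K]

theorem rank_add_rank_le_card_add_rank_mul {l m n : Type*} [Fintype m] [Fintype n]
    (A : Matrix l m K) (B : Matrix m n K) :
    A.rank + B.rank ≤ Fintype.card m + (A * B).rank := by
  have := LinearMap.finrank_range_add_finrank_range_le B.mulVecLin A.mulVecLin
  rw [← mulVecLin_mul, finrank_fintype_fun_eq_card] at this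
  unfold rank
  omega

theorem isUnit_of_rank_eq_card {m : Type*} [Fintype m] [DecidableEq m] {A : Matrix m m K}
    (h : A.rank = Fintype.card m) : IsUnit A :=
  mulVec_surjective_iff_isUnit.mp <| LinearMap.range_eq_top.mp <|
    Submodule.eq_top_of_finrank_eq <| by
      rw [show finrank K (LinearMap.range A.mulVecLin) = A.rank from rfl, h,
        finrank_fintype_fun_eq_card]

theorem rank_blockDiagonal'_of_rank_eq_card {ι : Type*} [Fintype ι] [DecidableEq ι]
    {o : ι → Type*} [∀ k, Fintype (o k)] [∀ k, DecidableEq (o k)]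
    {M : ∀ k, Matrix (o k) (o k) K} (h : ∀ k, (M k).rank = Fintype.card (o k)) :
    (blockDiagonal' M).rank = ∑ k, Fintype.card (o k) := by
  have hM : IsUnit (blockDiagonal' M) :=
    (Pi.isUnit_iff.mpr fun k => isUnit_of_rank_eq_card (h k)).map (blockDiagonal'RingHom o K)
  rw [rank_of_isUnit _ hM, Fintype.card_sigma]

theorem rank_add_rank_add_rank_le_of_mul_mul_eq_zero {l m n o : Type*} [Finite l] [Fintype m]
    [Fintype n] [Fintype o] {B : Matrix l m K} {G : Matrix m n K} {V : Matrix n o K}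
    (h : B * G * V = 0) : B.rank + G.rank + V.rank ≤ Fintype.card m + Fintype.card n := by
  have := rank_add_rank_le_card_of_mul_eq_zero h
  have := rank_add_rank_le_card_add_rank_mul B G
  omega

section Stacking

variable {R : Type*} {ι ι' : Type*} {κ : ι → Type*} {κ' : ι' → Type*} {m n : Type*}

def stackCols (X : ∀ k, Matrix m (κ k) R) : Matrix m (Σ k, κ k) R :=
  of fun i p => X p.1 i p.2

def stackRows (Y : ∀ k, Matrix (κ k) n R) : Matrix (Σ k, κ k) n R :=
  of fun p j => Y p.1 p.2 j

variable [Fintype m] [NonUnitalNonAssocSemiring R]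

theorem stackRows_mul {o : Type*} (Y : ∀ k, Matrix (κ k) m R) (A : Matrix m o R) :
    stackRows Y * A = stackRows fun k => Y k * A := by
  ext p j
  simp [stackRows, mul_apply]

theorem stackRows_mul_stackCols_apply (Y : ∀ k, Matrix (κ k) m R) (X : ∀ i, Matrix m (κ' i) R)
    (p : Σ k, κ k) (q : Σ i, κ' i) :
    (stackRows Y * stackCols X) p q = (Y p.1 * X q.1) p.2 q.2 := by
  simp [stackRows, stackCols, mul_apply]

theorem stackRows_mul_stackCols_eq_zero {Y : ∀ k, Matrix (κ k) m R}
    {X : ∀ i, Matrix m (κ' i) R}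
    (h : ∀ k i, Y k * X i = 0) : stackRows Y * stackCols X = 0 := by
  ext p q
  rw [stackRows_mul_stackCols_apply, h, zero_apply, zero_apply]

theorem stackRows_mul_stackCols_eq_blockDiagonal' [DecidableEq ι] [∀ k, DecidableEq (κ k)]
    {Y : ∀ k, Matrix (κ k) m R} {X : ∀ k, Matrix m (κ k) R}
    (h : ∀ k i, i ≠ k → Y k * X i = 0) :
    stackRows Y * stackCols X = blockDiagonal' fun k => Y k * X k := by
  ext ⟨k, a⟩ ⟨i, b⟩
  rw [stackRows_mul_stackCols_apply]
  by_cases hki : k = i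
  · subst hki
    rw [blockDiagonal'_apply_eq]
  · rw [blockDiagonal'_apply_ne _ _ _ hki, h k i (Ne.symm hki), zero_apply]

end Stacking

section StackingRank

variable {ι : Type*} [Fintype ι] [DecidableEq ι] {κ : ι → Type*} [∀ k, Fintype (κ k)]
  [∀ k, DecidableEq (κ k)] {m : Type*} [Fintype m]
  {Y : ∀ k, Matrix (κ k) m K} {X : ∀ k, Matrix m (κ k) K}

theorem rank_stackRows_mul_stackCols (hZF : ∀ k i, i ≠ k → Y k * X i = 0)
    (hrank : ∀ k, (Y k * X k).rank = Fintype.card (κ k)) :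
    (stackRows Y * stackCols X).rank = ∑ k, Fintype.card (κ k) := by
  rw [stackRows_mul_stackCols_eq_blockDiagonal' hZF, rank_blockDiagonal'_of_rank_eq_card hrank]

theorem sum_card_le_rank_stackCols (hZF : ∀ k i, i ≠ k → Y k * X i = 0)
    (hrank : ∀ k, (Y k * X k).rank = Fintype.card (κ k)) :
    ∑ k, Fintype.card (κ k) ≤ (stackCols X).rank :=
  rank_stackRows_mul_stackCols hZF hrank ▸ rank_mul_le_right _ _

theorem sum_card_le_rank_stackRows (hZF : ∀ k i, i ≠ k → Y k * X i = 0)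
    (hrank : ∀ k, (Y k * X k).rank = Fintype.card (κ k)) :
    ∑ k, Fintype.card (κ k) ≤ (stackRows Y).rank :=
  rank_stackRows_mul_stackCols hZF hrank ▸ rank_mul_le_left _ _

end StackingRank

end Matrix

theorem dof_sum_le_max_M_general (K L Mα Mβ : ℕ)
    (Nα dα : Fin K → ℕ) (Nβ dβ : Fin L → ℕ)
    (Hα : ∀ k : Fin K, Matrix (Fin (Nα k)) (Fin Mα) ℂ)
    (Uα : ∀ k : Fin K, Matrix (Fin (Nα k)) (Fin (dα k)) ℂ)
    (Vα : ∀ k : Fin K, Matrix (Fin Mα) (Fin (dα k)) ℂ)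
    (Hβ : ∀ l : Fin L, Matrix (Fin Mβ) (Fin (Nβ l)) ℂ)
    (Vβ : ∀ l : Fin L, Matrix (Fin (Nβ l)) (Fin (dβ l)) ℂ)
    (Uβ : ∀ l : Fin L, Matrix (Fin Mβ) (Fin (dβ l)) ℂ)
    (Gβ : Matrix (Fin Mβ) (Fin Mα) ℂ)
    (hZFα : ∀ k i : Fin K, i ≠ k → (Uα k)ᴴ * Hα k * Vα i = 0)
    (hrankα : ∀ k : Fin K, ((Uα k)ᴴ * Hα k * Vα k).rank = dα k)
    (hZFβ : ∀ l j : Fin L, j ≠ l → (Uβ l)ᴴ * Hβ j * Vβ j = 0)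
    (hrankβ : ∀ l : Fin L, ((Uβ l)ᴴ * Hβ l * Vβ l).rank = dβ l)
    (hZFcross : ∀ (k : Fin K) (l : Fin L), (Uβ l)ᴴ * Gβ * Vα k = 0)
    (hGβ : Gβ.rank = min Mα Mβ) :
    ∑ k, dα k + ∑ l, dβ l ≤ max Mα Mβ := by
  have hV : ∑ k, dα k ≤ (stackCols Vα).rank := by
    simpa using sum_card_le_rank_stackCols (Y := fun k => (Uα k)ᴴ * Hα k) hZFα
      (by simpa using hrankα)
  have hB : ∑ l, dβ l ≤ (stackRows fun l => (Uβ l)ᴴ).rank := by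
    simpa using sum_card_le_rank_stackRows (X := fun l => Hβ l * Vβ l)
      (by simpa only [Matrix.mul_assoc] using hZFβ) (by simpa [Matrix.mul_assoc] using hrankβ)
  have hcross : (stackRows fun l => (Uβ l)ᴴ) * Gβ * stackCols Vα = 0 := by
    rw [stackRows_mul]
    exact stackRows_mul_stackCols_eq_zero fun l k => hZFcross k l
  have := rank_add_rank_add_rank_le_of_mul_mul_eq_zero hcross
  simp only [Fintype.card_fin] at this
  omega

/-- **Condition (8c) of Theorem 1 (deterministic form).** Under the one-shot linear
interference-alignment conditions of the two-cell MIMO reverse-TDD network and a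
full-rank BS-to-BS channel `Gβ`, the total DoF of both cells is at most
`max Mα Mβ`. -/
theorem dof_sum_le_max_M (K L Mα Mβ : ℕ) (hK : 1 ≤ K) (hL : 1 ≤ L)
    (hMα : 1 ≤ Mα) (hMβ : 1 ≤ Mβ)
    (Nα dα : Fin K → ℕ) (Nβ dβ : Fin L → ℕ)
    (hdα : ∀ k, 1 ≤ dα k) (hdβ : ∀ l, 1 ≤ dβ l)
    (Hα : ∀ k : Fin K, Matrix (Fin (Nα k)) (Fin Mα) ℂ)
    (Uα : ∀ k : Fin K, Matrix (Fin (Nα k)) (Fin (dα k)) ℂ)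
    (Vα : ∀ k : Fin K, Matrix (Fin Mα) (Fin (dα k)) ℂ)
    (Hβ : ∀ l : Fin L, Matrix (Fin Mβ) (Fin (Nβ l)) ℂ)
    (Vβ : ∀ l : Fin L, Matrix (Fin (Nβ l)) (Fin (dβ l)) ℂ)
    (Uβ : ∀ l : Fin L, Matrix (Fin Mβ) (Fin (dβ l)) ℂ)
    (Gβ : Matrix (Fin Mβ) (Fin Mα) ℂ)
    (hZFα : ∀ k i : Fin K, i ≠ k → (Uα k)ᴴ * Hα k * Vα i = 0)
    (hrankα : ∀ k : Fin K, ((Uα k)ᴴ * Hα k * Vα k).rank = dα k)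
    (hZFβ : ∀ l j : Fin L, j ≠ l → (Uβ l)ᴴ * Hβ j * Vβ j = 0)
    (hrankβ : ∀ l : Fin L, ((Uβ l)ᴴ * Hβ l * Vβ l).rank = dβ l)
    (hZFcross : ∀ (k : Fin K) (l : Fin L), (Uβ l)ᴴ * Gβ * Vα k = 0)
    (hGβ : Gβ.rank = min Mα Mβ) :
    ∑ k, dα k + ∑ l, dβ l ≤ max Mα Mβ :=
  dof_sum_le_max_M_general K L Mα Mβ Nα dα Nβ dβ Hα Uα Vα Hβ Vβ Uβ Gβ hZFα hrankα hZFβ hrankβ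
    hZFcross hGβ
end

section
/- Combinatorial core of Lemma 2 (complete matching via Hall's theorem). Let K, L ≥ 1 and let A : {1,…,K} → ℕ and B : {1,…,L} → ℕ. Suppose that for every I_α ⊆ {1,…,K} and every I_β ⊆ {1,…,L}, |I_α| · |I_β| ≤ ∑_{k∈I_α} A(k) + ∑_{l∈I_β} B(l). Then there exists an injective function φ on {1,…,K} × {1,…,L} such that for every pair (k,l), φ(k,l) is either an element of {k} × {1,…,A(k)} (tagged left) or an element of {l} × {1,…,B(l)} (tagged right); i.e., the bipartite graph whose left vertices are the pairs (k,l) and whose right vertices are the disjoint union of the sets {k}×{1,…,A(k)} and {l}×{1,…,B(l)}, with (k,l) adjacent exactly to the elements of {k}×{1,…,A(k)} and {l}×{1,…,B(l)}, has a complete matching saturating all left vertices. -/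
/-- **Combinatorial core of Lemma 2 (complete matching via Hall's theorem).**
If for all subsets `Iα ⊆ {1,…,K}` and `Iβ ⊆ {1,…,L}` one has
`|Iα|·|Iβ| ≤ ∑_{k∈Iα} A k + ∑_{l∈Iβ} B l`, then the bipartite graph whose left
vertices are the pairs `(k,l)` and whose right vertices are the disjoint union
of the sets `{k}×{1,…,A k}` and `{l}×{1,…,B l}`, with `(k,l)` adjacent exactly
to the elements of `{k}×{1,…,A k}` and `{l}×{1,…,B l}`, has a complete matching
saturating all left vertices. -/
theorem complete_matching_of_hall_condition (K L : ℕ) (hK : 1 ≤ K) (hL : 1 ≤ L)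
    (A : Fin K → ℕ) (B : Fin L → ℕ)
    (hHall : ∀ (Iα : Finset (Fin K)) (Iβ : Finset (Fin L)),
      Iα.card * Iβ.card ≤ ∑ k ∈ Iα, A k + ∑ l ∈ Iβ, B l) :
    ∃ φ : Fin K × Fin L → (Σ k : Fin K, Fin (A k)) ⊕ (Σ l : Fin L, Fin (B l)),
      Function.Injective φ ∧
      ∀ (k : Fin K) (l : Fin L),
        (∃ j : Fin (A k), φ (k, l) = Sum.inl ⟨k, j⟩) ∨
        (∃ j : Fin (B l), φ (k, l) = Sum.inr ⟨l, j⟩) := by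
  classical
  set R := (Σ k : Fin K, Fin (A k)) ⊕ (Σ l : Fin L, Fin (B l)) with hR
  set leftB : Fin K → Finset R :=
    fun k => (Finset.univ : Finset (Fin (A k))).image fun j => Sum.inl ⟨k, j⟩ with hleftB
  set rightB : Fin L → Finset R :=
    fun l => (Finset.univ : Finset (Fin (B l))).image fun j => Sum.inr ⟨l, j⟩ with hrightB
  set t : Fin K × Fin L → Finset R := fun p => leftB p.1 ∪ rightB p.2 with ht
  have hleftcard : ∀ k, (leftB k).card = A k := by
    intro k
    rw [hleftB]
    rw [Finset.card_image_of_injective _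
      (fun a b h => sigma_mk_injective (Sum.inl_injective h))]
    simp
  have hrightcard : ∀ l, (rightB l).card = B l := by
    intro l
    rw [hrightB]
    rw [Finset.card_image_of_injective _
      (fun a b h => sigma_mk_injective (Sum.inr_injective h))]
    simp
  have hall : ∀ S : Finset (Fin K × Fin L), S.card ≤ (S.biUnion t).card := by
    intro S
    set Iα := S.image Prod.fst with hIα
    set Iβ := S.image Prod.snd with hIβ
    have hsub : S ⊆ Iα ×ˢ Iβ := by
      intro p hp
      rw [Finset.mem_product]
      exact ⟨Finset.mem_image.2 ⟨p, hp, rfl⟩, Finset.mem_image.2 ⟨p, hp, rfl⟩⟩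
    have h1 : S.card ≤ Iα.card * Iβ.card := by
      calc S.card ≤ (Iα ×ˢ Iβ).card := Finset.card_le_card hsub
        _ = Iα.card * Iβ.card := Finset.card_product _ _
    have hunion : S.biUnion t = Iα.biUnion leftB ∪ Iβ.biUnion rightB := by
      ext x
      simp only [Finset.mem_biUnion, Finset.mem_union, ht]
      constructor
      · rintro ⟨p, hp, hx | hx⟩
        · exact Or.inl ⟨p.1, Finset.mem_image.2 ⟨p, hp, rfl⟩, hx⟩
        · exact Or.inr ⟨p.2, Finset.mem_image.2 ⟨p, hp, rfl⟩, hx⟩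
      · rintro (⟨k, hk, hx⟩ | ⟨l, hl, hx⟩)
        · obtain ⟨p, hp, rfl⟩ := Finset.mem_image.1 hk
          exact ⟨p, hp, Or.inl hx⟩
        · obtain ⟨p, hp, rfl⟩ := Finset.mem_image.1 hl
          exact ⟨p, hp, Or.inr hx⟩
    have hdisjL : ∀ k₁ ∈ Iα, ∀ k₂ ∈ Iα, k₁ ≠ k₂ → Disjoint (leftB k₁) (leftB k₂) := by
      intro k₁ _ k₂ _ hne
      rw [Finset.disjoint_left]
      intro x hx₁ hx₂
      simp only [hleftB, Finset.mem_image] at hx₁ hx₂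
      obtain ⟨j₁, _, rfl⟩ := hx₁
      obtain ⟨j₂, _, h⟩ := hx₂
      exact hne (congrArg (fun y => (Sum.elim Sigma.fst (fun _ => k₁)) y) h.symm)
    have hdisjR : ∀ l₁ ∈ Iβ, ∀ l₂ ∈ Iβ, l₁ ≠ l₂ → Disjoint (rightB l₁) (rightB l₂) := by
      intro l₁ _ l₂ _ hne
      rw [Finset.disjoint_left]
      intro x hx₁ hx₂
      simp only [hrightB, Finset.mem_image] at hx₁ hx₂
      obtain ⟨j₁, _, rfl⟩ := hx₁
      obtain ⟨j₂, _, h⟩ := hx₂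
      exact hne (congrArg (fun y => (Sum.elim (fun _ => l₁) Sigma.fst) y) h.symm)
    have hdisjLR : Disjoint (Iα.biUnion leftB) (Iβ.biUnion rightB) := by
      rw [Finset.disjoint_left]
      intro x hx₁ hx₂
      simp only [Finset.mem_biUnion, hleftB, hrightB, Finset.mem_image] at hx₁ hx₂
      obtain ⟨_, _, _, _, rfl⟩ := hx₁
      obtain ⟨_, _, _, _, h⟩ := hx₂
      exact absurd h (by simp)
    have hcard : (S.biUnion t).card = ∑ k ∈ Iα, A k + ∑ l ∈ Iβ, B l := by
      rw [hunion, Finset.card_union_of_disjoint hdisjLR,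
        Finset.card_biUnion hdisjL, Finset.card_biUnion hdisjR]
      simp [hleftcard, hrightcard]
    rw [hcard]
    exact h1.trans (hHall Iα Iβ)
  obtain ⟨f, hfinj, hfmem⟩ :=
    (Finset.all_card_le_biUnion_card_iff_exists_injective t).1 hall
  refine ⟨f, hfinj, fun k l => ?_⟩
  have := hfmem (k, l)
  simp only [ht, Finset.mem_union, hleftB, hrightB, Finset.mem_image, Finset.mem_univ,
    true_and] at this
  rcases this with ⟨j, hj⟩ | ⟨j, hj⟩
  · exact Or.inl ⟨j, hj.symm⟩
  · exact Or.inr ⟨j, hj.symm⟩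
end

section
/- Lemma 2 (existence of a channel realization with surjective Jacobian), linear-map form. Let K, L ≥ 1, d_α, d_β ≥ 1, and let N_{αk} ≥ d_α (k = 1,…,K) and N_{βl} ≥ d_β (l = 1,…,L) satisfy: d_β divides N_{αk} − d_α and d_α divides N_{βl} − d_β for all k, l; and for every I_α ⊆ {1,…,K} and I_β ⊆ {1,…,L}, |I_α| |I_β| d_α d_β ≤ ∑_{k∈I_α} d_α(N_{αk} − d_α) + ∑_{l∈I_β} d_β(N_{βl} − d_β). Then there exist matrices G^{(3)}_{kl} ∈ ℂ^{(N_{αk}−d_α)×d_β} and G^{(2)}_{kl} ∈ ℂ^{d_α×(N_{βl}−d_β)} (k = 1,…,K, l = 1,…,L) such that the ℂ-linear map sending a tuple ((Ū_k)_{k=1}^K, (V̄_l)_{l=1}^L), with Ū_k ∈ ℂ^{(N_{αk}−d_α)×d_α} and V̄_l ∈ ℂ^{(N_{βl}−d_β)×d_β}, to the tuple (Ū_k† G^{(3)}_{kl} + G^{(2)}_{kl} V̄_l)_{k=1,…,K; l=1,…,L} ∈ ∏_{k,l} ℂ^{d_α×d_β} is surjective. -/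
/-!
Split the rows of `Ūₖ` into `(N_αk - d_α) / d_β` blocks of size `d_β × d_α` and the rows of
`V̄ₗ` into `(N_βl - d_β) / d_α` blocks of size `d_α × d_β`. After dividing by `d_α d_β`, the
product-subset inequality is Hall's condition for assigning to every pair `(k, l)` its own block,
taken from `Ūₖ` or from `V̄ₗ`. Let `G⁽³⁾ₖₗ` and `G⁽²⁾ₖₗ` be the 0/1 matrices picking out the block
assigned to `(k, l)`. Then the `(k, l)` output is that block (conjugate-transposed if it comes from
`Ūₖ`), and since different pairs get different blocks, every target can be reached.
-/

open Matrix Function Finset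

namespace Matrix

variable {m n o p 𝕜 : Type*} [Fintype n] [DecidableEq o] [NonAssocSemiring 𝕜]

theorem mul_submatrix_one_eq_extend (M : Matrix m n 𝕜) {ρ : n → o} (hρ : Injective ρ)
    (τ : p → o) : M * (1 : Matrix o o 𝕜).submatrix ρ τ = of fun i j => extend ρ (M i) 0 (τ j) := by
  classical
  ext i j
  by_cases h : ∃ r, ρ r = τ j
  · obtain ⟨r, hr⟩ := h
    simp [mul_apply, one_apply, ← hr, hρ.extend_apply, hρ.eq_iff]
  · simp [mul_apply, not_exists.1 h]

theorem submatrix_one_mul_eq_extend (τ : p → o) {ρ : n → o} (hρ : Injective ρ)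
    (M : Matrix n m 𝕜) :
    (1 : Matrix o o 𝕜).submatrix τ ρ * M = of fun i j => extend ρ (fun r => M r j) 0 (τ i) := by
  classical
  ext i j
  by_cases h : ∃ r, ρ r = τ i
  · obtain ⟨r, hr⟩ := h
    simp [mul_apply, one_apply, ← hr, hρ.extend_apply, hρ.eq_iff]
  · simp [mul_apply, not_exists.1 h, fun r => Ne.symm (not_exists.1 h r)]

end Matrix

theorem card_mul_card_le_sum_div {ι κ : Type*} {A : Finset ι} {B : Finset κ} {dα dβ : ℕ}
    (hdα : 0 < dα) (hdβ : 0 < dβ) {a : ι → ℕ} {b : κ → ℕ}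
    (ha : ∀ k, dβ ∣ a k) (hb : ∀ l, dα ∣ b l)
    (h : #A * #B * dα * dβ ≤ ∑ k ∈ A, dα * a k + ∑ l ∈ B, dβ * b l) :
    #A * #B ≤ ∑ k ∈ A, a k / dβ + ∑ l ∈ B, b l / dα := by
  refine Nat.le_of_mul_le_mul_left ?_ (Nat.mul_pos hdα hdβ)
  calc dα * dβ * (#A * #B) = #A * #B * dα * dβ := by ring
    _ ≤ ∑ k ∈ A, dα * a k + ∑ l ∈ B, dβ * b l := h
    _ = dα * dβ * (∑ k ∈ A, a k / dβ + ∑ l ∈ B, b l / dα) := by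
      rw [mul_add, mul_sum, mul_sum]
      congr 1 <;> refine sum_congr rfl fun x _ => ?_
      · rw [mul_assoc, Nat.mul_div_cancel' (ha x)]
      · rw [mul_comm dα, mul_assoc, Nat.mul_div_cancel' (hb x)]

theorem exists_injective_slot_assignment {ι κ : Type*} {Sα : ι → Type*} {Sβ : κ → Type*}
    [∀ k, Fintype (Sα k)] [∀ l, Fintype (Sβ l)]
    (hall : ∀ (A : Finset ι) (B : Finset κ),
      #A * #B ≤ ∑ k ∈ A, Fintype.card (Sα k) + ∑ l ∈ B, Fintype.card (Sβ l)) :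
    ∃ f : ι × κ → (Σ k, Sα k) ⊕ (Σ l, Sβ l), Injective f ∧
      ∀ k l, (∃ i, f (k, l) = .inl ⟨k, i⟩) ∨ (∃ j, f (k, l) = .inr ⟨l, j⟩) := by
  classical
  let slots (p : ι × κ) : Finset ((Σ k, Sα k) ⊕ (Σ l, Sβ l)) :=
    (({p.1} : Finset ι).sigma fun _ => univ).disjSum (({p.2} : Finset κ).sigma fun _ => univ)
  have hcard (s : Finset (ι × κ)) : #s ≤ #(s.biUnion slots) := by
    let A := s.image Prod.fst
    let B := s.image Prod.snd
    calc #s ≤ #A * #B := (card_le_card subset_product).trans (card_product A B).le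
      _ ≤ ∑ k ∈ A, Fintype.card (Sα k) + ∑ l ∈ B, Fintype.card (Sβ l) := hall A B
      _ = #((A.sigma fun _ => univ).disjSum (B.sigma fun _ => univ)) := by
        simp [card_disjSum, card_sigma]
      _ ≤ #(s.biUnion slots) := card_le_card fun x hx => by
        rcases x with ⟨k, i⟩ | ⟨l, j⟩ <;> aesop
  obtain ⟨f, hf, hslot⟩ := (all_card_le_biUnion_card_iff_exists_injective slots).1 hcard
  refine ⟨f, hf, fun k l => ?_⟩
  have h := hslot (k, l)
  simp only [slots, mem_disjSum] at h
  obtain ⟨⟨k', i⟩, hk, hi⟩ | ⟨⟨l', j⟩, hl, hj⟩ := h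
  · obtain rfl : k' = k := by simpa using hk
    exact .inl ⟨i, hi.symm⟩
  · obtain rfl : l' = l := by simpa using hl
    exact .inr ⟨j, hj.symm⟩

theorem exists_surjective_conjTranspose_mul_add_mul {𝕜 : Type*} [Semiring 𝕜] [StarRing 𝕜]
    {ι κ α β : Type*} {R : ι → Type*} {C : κ → Type*}
    [∀ k, Fintype (R k)] [∀ l, Fintype (C l)] {Sα : ι → Type*} {Sβ : κ → Type*}
    (eα : ∀ k, R k ≃ Sα k × β) (eβ : ∀ l, C l ≃ Sβ l × α)
    (f : ι × κ → (Σ k, Sα k) ⊕ (Σ l, Sβ l)) (hf : Injective f)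
    (hslot : ∀ k l, (∃ i, f (k, l) = .inl ⟨k, i⟩) ∨ (∃ j, f (k, l) = .inr ⟨l, j⟩)) :
    ∃ (G3 : ∀ k, κ → Matrix (R k) β 𝕜) (G2 : ι → ∀ l, Matrix α (C l) 𝕜),
      Surjective fun UV : (∀ k, Matrix (R k) α 𝕜) × (∀ l, Matrix (C l) β 𝕜) =>
        fun k l => (UV.1 k)ᴴ * G3 k l + G2 k l * UV.2 l := by
  classical
  let ρ (k : ι) : R k → ((Σ k, Sα k) ⊕ (Σ l, Sβ l)) × β :=
    Prod.map (Sum.inl ∘ Sigma.mk k) id ∘ eα k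
  let σ (l : κ) : C l → ((Σ k, Sα k) ⊕ (Σ l, Sβ l)) × α :=
    Prod.map (Sum.inr ∘ Sigma.mk l) id ∘ eβ l
  have hρ (k : ι) : Injective (ρ k) :=
    (Sum.inl_injective.comp sigma_mk_injective |>.prodMap injective_id).comp (eα k).injective
  have hσ (l : κ) : Injective (σ l) :=
    (Sum.inr_injective.comp sigma_mk_injective |>.prodMap injective_id).comp (eβ l).injective
  -- Both selectors are indexed by the slot `f (k, l)`; each vanishes unless it owns that slot.
  refine ⟨fun k l => (1 : Matrix _ _ 𝕜).submatrix (ρ k) (f (k, l), ·),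
    fun k l => (1 : Matrix _ _ 𝕜).submatrix (f (k, l), ·) (σ l), fun F => ?_⟩
  let W : (Σ k, Sα k) ⊕ (Σ l, Sβ l) → Matrix α β 𝕜 := extend f (fun p => F p.1 p.2) 0
  have hW (k : ι) (l : κ) : W (f (k, l)) = F k l := hf.extend_apply _ _ _
  refine ⟨(fun k => of fun r a => star (W (ρ k r).1 a (ρ k r).2),
    fun l => of fun c b => W (σ l c).1 (σ l c).2 b), ?_⟩
  funext k l
  ext a b
  simp only [mul_submatrix_one_eq_extend _ (hρ k), submatrix_one_mul_eq_extend _ (hσ l),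
    Matrix.add_apply, of_apply]
  rcases hslot k l with ⟨i, hi⟩ | ⟨j, hj⟩
  · have hb : (f (k, l), b) = ρ k ((eα k).symm (i, b)) := by simp [ρ, hi]
    rw [hb, (hρ k).extend_apply, extend_apply']
    · simp [ρ, ← hi, hW]
    · rintro ⟨c, hc⟩
      exact Sum.inr_ne_inl ((congrArg Prod.fst hc).trans hi)
  · have ha : (f (k, l), a) = σ l ((eβ l).symm (j, a)) := by simp [σ, hj]
    rw [ha, (hσ l).extend_apply, extend_apply']
    · simp [σ, ← hj, hW]
    · rintro ⟨r, hr⟩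
      exact Sum.inl_ne_inr ((congrArg Prod.fst hr).trans hj)

theorem exists_channel_with_surjective_jacobian_general (K L dα dβ : ℕ)
    (hdα : 1 ≤ dα) (hdβ : 1 ≤ dβ)
    (Nα : Fin K → ℕ) (Nβ : Fin L → ℕ)
    (hdiv1 : ∀ k, dβ ∣ (Nα k - dα)) (hdiv2 : ∀ l, dα ∣ (Nβ l - dβ))
    (hineq : ∀ (Iα : Finset (Fin K)) (Iβ : Finset (Fin L)),
      Iα.card * Iβ.card * dα * dβ ≤
        ∑ k ∈ Iα, dα * (Nα k - dα) + ∑ l ∈ Iβ, dβ * (Nβ l - dβ)) :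
    ∃ (G3 : ∀ (k : Fin K) (l : Fin L), Matrix (Fin (Nα k - dα)) (Fin dβ) ℂ)
      (G2 : ∀ (k : Fin K) (l : Fin L), Matrix (Fin dα) (Fin (Nβ l - dβ)) ℂ),
      Function.Surjective
        (fun (UV : (∀ k : Fin K, Matrix (Fin (Nα k - dα)) (Fin dα) ℂ) ×
            (∀ l : Fin L, Matrix (Fin (Nβ l - dβ)) (Fin dβ) ℂ)) =>
          (fun (k : Fin K) (l : Fin L) => (UV.1 k)ᴴ * G3 k l + G2 k l * UV.2 l :
            ∀ (k : Fin K) (l : Fin L), Matrix (Fin dα) (Fin dβ) ℂ)) := by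
  obtain ⟨f, hf, hslot⟩ := exists_injective_slot_assignment
    (Sα := fun k => Fin ((Nα k - dα) / dβ)) (Sβ := fun l => Fin ((Nβ l - dβ) / dα))
    fun Iα Iβ => by
      simpa using card_mul_card_le_sum_div hdα hdβ hdiv1 hdiv2 (hineq Iα Iβ)
  exact exists_surjective_conjTranspose_mul_add_mul
    (fun k => (finCongr (Nat.div_mul_cancel (hdiv1 k)).symm).trans finProdFinEquiv.symm)
    (fun l => (finCongr (Nat.div_mul_cancel (hdiv2 l)).symm).trans finProdFinEquiv.symm)
    f hf hslot

/-- **Lemma 2 (existence of a channel realization with surjective Jacobian),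
linear-map form.** Under the divisibility conditions and the product-subset
inequality (conditions (19d) and (19e) of Theorem 3), there exist channel
blocks `G⁽³⁾ₖₗ` and `G⁽²⁾ₖₗ` such that the map sending the variable blocks
`(Ūₖ, V̄ₗ)` to `(Ūₖᴴ G⁽³⁾ₖₗ + G⁽²⁾ₖₗ V̄ₗ)ₖₗ` is surjective. -/
theorem exists_channel_with_surjective_jacobian (K L dα dβ : ℕ)
    (hK : 1 ≤ K) (hL : 1 ≤ L) (hdα : 1 ≤ dα) (hdβ : 1 ≤ dβ)
    (Nα : Fin K → ℕ) (Nβ : Fin L → ℕ)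
    (hNα : ∀ k, dα ≤ Nα k) (hNβ : ∀ l, dβ ≤ Nβ l)
    (hdiv1 : ∀ k, dβ ∣ (Nα k - dα)) (hdiv2 : ∀ l, dα ∣ (Nβ l - dβ))
    (hineq : ∀ (Iα : Finset (Fin K)) (Iβ : Finset (Fin L)),
      Iα.card * Iβ.card * dα * dβ ≤
        ∑ k ∈ Iα, dα * (Nα k - dα) + ∑ l ∈ Iβ, dβ * (Nβ l - dβ)) :
    ∃ (G3 : ∀ (k : Fin K) (l : Fin L), Matrix (Fin (Nα k - dα)) (Fin dβ) ℂ)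
      (G2 : ∀ (k : Fin K) (l : Fin L), Matrix (Fin dα) (Fin (Nβ l - dβ)) ℂ),
      Function.Surjective
        (fun (UV : (∀ k : Fin K, Matrix (Fin (Nα k - dα)) (Fin dα) ℂ) ×
            (∀ l : Fin L, Matrix (Fin (Nβ l - dβ)) (Fin dβ) ℂ)) =>
          (fun (k : Fin K) (l : Fin L) => (UV.1 k)ᴴ * G3 k l + G2 k l * UV.2 l :
            ∀ (k : Fin K) (l : Fin L), Matrix (Fin dα) (Fin dβ) ℂ)) :=
  exists_channel_with_surjective_jacobian_general K L dα dβ hdα hdβ Nα Nβ hdiv1 hdiv2 hineq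
end
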